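/- If S contains a duplicate pair (two elements with equal value a), then |Σ(S)| ≤ (3/4)·2^n, where n = |S| as a multiset. -/
import Mathlib


/-- The set of distinct subset sums of a multiset `S` of naturals. -/
def sigmaSet (S : Multiset ℕ) : Finset ℕ :=
  (S.powerset.map Multiset.sum).toFinset

/-- if the multiset `S` of `n` positive integers contains some
value `a` with multiplicity at least 2, then `|Σ(S)| ≤ (3/4)·2^n`. -/
theorem duplicate_pair_bound (S : Multiset ℕ) (hpos : ∀ x ∈ S, 0 < x)
    (n : ℕ) (hn : S.card = n) (a : ℕ) (ha : 2 ≤ S.count a) :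
    4 * (sigmaSet S).card ≤ 3 * 2 ^ n := by
  rw [Multiset.le_count_iff_replicate_le] at ha
  obtain ⟨T, hT⟩ := Multiset.le_iff_exists_add.mp ha
  have hS : S = a ::ₘ a ::ₘ T := by
    rw [hT]; simp [Multiset.replicate_succ]
  subst hn
  have hcard : S.card = T.card + 2 := by rw [hS]; simp
  set F : Finset ℕ := (T.powerset.map Multiset.sum).toFinset with hF
  have hsub : sigmaSet S ⊆ F ∪ F.image (· + a) ∪ F.image (· + (a + a)) := by
    intro s hs
    simp only [sigmaSet, Multiset.mem_toFinset, Multiset.mem_map] at hs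
    obtain ⟨u, hu, rfl⟩ := hs
    rw [hS] at hu
    rw [Multiset.powerset_cons, Multiset.powerset_cons] at hu
    simp only [Multiset.mem_add, Multiset.mem_map, Multiset.mem_powerset] at hu
    have memF : ∀ v : Multiset ℕ, v ≤ T → v.sum ∈ F := by
      intro v hv
      simp only [hF, Multiset.mem_toFinset, Multiset.mem_map]
      exact ⟨v, Multiset.mem_powerset.mpr hv, rfl⟩
    simp only [Finset.mem_union, Finset.mem_image]
    rcases hu with ((h | ⟨v, hv, rfl⟩) | ⟨v, (h | ⟨w, hw, rfl⟩), rfl⟩)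
    · exact Or.inl (Or.inl (memF u h))
    · exact Or.inl (Or.inr ⟨v.sum, memF v hv, by simp [add_comm]⟩)
    · exact Or.inl (Or.inr ⟨v.sum, memF v h, by simp [add_comm]⟩)
    · refine Or.inr ⟨w.sum, memF w hw, ?_⟩
      simp [Multiset.sum_cons]; ring
  have hFcard : F.card ≤ 2 ^ T.card := by
    calc F.card ≤ Multiset.card (T.powerset.map Multiset.sum) :=
          Multiset.toFinset_card_le _
      _ = 2 ^ T.card := by simp
  have h1 : (sigmaSet S).card ≤ 3 * 2 ^ T.card := by
    calc (sigmaSet S).card ≤ (F ∪ F.image (· + a) ∪ F.image (· + (a + a))).card :=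
          Finset.card_le_card hsub
      _ ≤ F.card + (F.image (· + a)).card + (F.image (· + (a + a))).card := by
          refine le_trans (Finset.card_union_le _ _) ?_
          exact Nat.add_le_add_right (Finset.card_union_le _ _) _
      _ ≤ F.card + F.card + F.card :=
          Nat.add_le_add (Nat.add_le_add_left (Finset.card_image_le) _)
            Finset.card_image_le
      _ ≤ 3 * 2 ^ T.card := by omega
  rw [hcard]
  calc 4 * (sigmaSet S).card ≤ 4 * (3 * 2 ^ T.card) := by omega
    _ = 3 * 2 ^ (T.card + 2) := by ring
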